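/- arXiv:2312.01730 — 2 statements merged into one kernel-verified Lean document; each statement's English description precedes it below -/
import Mathlib

section
/- Let K be a nonempty subset of L^p(Ω; E). K is p-integrably bounded (i.e., there exists h ∈ L^p(Ω; ℝ≥0) with ‖f(ω)‖ ≤ h(ω) a.e. for every f ∈ K) if and only if the closed decomposable hull of K is a bounded subset of L^p(Ω; E). -/
open MeasureTheory ENNReal NNReal

section Aux
variable {Ω E : Type*} [MeasurableSpace Ω] [NormedAddCommGroup E]
    {P : Measure Ω} {p : ℝ≥0∞}

lemma meas_sup_aux (F : Finset (Lp E p P)) :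
    Measurable fun ω => ((F.sup fun f => ‖(f : Lp E p P) ω‖₊ : ℝ≥0) : ℝ≥0∞) := by
  classical
  refine Measurable.coe_nnreal_ennreal ?_
  induction F using Finset.induction_on with
  | empty => simp only [Finset.sup_empty]; exact measurable_const
  | insert _ _ _ ih =>
      simp only [Finset.sup_insert]
      exact ((Lp.stronglyMeasurable _).nnnorm.measurable).max ih

end Aux

/-- A nonempty subset `K ⊆ L^p(Ω; E)` is `p`-integrably bounded iff the
closure of its decomposable hull is a norm-bounded subset of `L^p`. -/
theorem integrablyBounded_iff_closedDecHull_bounded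
    {Ω E : Type*} [MeasurableSpace Ω] [NormedAddCommGroup E]
    (P : Measure Ω) [IsProbabilityMeasure P] (p : ℝ≥0∞) [Fact (1 ≤ p)]
    (K : Set (Lp E p P)) (hK : K.Nonempty) :
    (∃ h : Ω → ℝ, MemLp h p P ∧ 0 ≤ᵐ[P] h ∧
        ∀ f ∈ K, ∀ᵐ ω ∂P, ‖(f : Lp E p P) ω‖ ≤ h ω) ↔
      ∃ C : ℝ, ∀ g ∈ closure (⋂₀ {S : Set (Lp E p P) | K ⊆ S ∧
          ∀ f ∈ S, ∀ l ∈ S, ∀ A : Set Ω, MeasurableSet A →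
            ∃ g' ∈ S, (g' : Lp E p P) =ᵐ[P] fun ω => A.indicator (⇑f) ω + Aᶜ.indicator (⇑l) ω}),
        ‖g‖ ≤ C := by
  classical
  set 𝒮 : Set (Set (Lp E p P)) := {S : Set (Lp E p P) | K ⊆ S ∧
      ∀ f ∈ S, ∀ l ∈ S, ∀ A : Set Ω, MeasurableSet A →
        ∃ g' ∈ S, (g' : Lp E p P) =ᵐ[P] fun ω => A.indicator (⇑f) ω + Aᶜ.indicator (⇑l) ω}
    with h𝒮
  set D : Set (Lp E p P) := ⋂₀ 𝒮 with hD
  -- membership of K in D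
  have hKD : K ⊆ D := fun x hx => Set.mem_sInter.2 fun S hS => hS.1 hx
  -- the combination as an Lp element
  have combMem : ∀ (f l : Lp E p P) (A : Set Ω), MeasurableSet A →
      MemLp (fun ω => A.indicator (⇑f) ω + Aᶜ.indicator (⇑l) ω) p P :=
    fun f l A hA => ((Lp.memLp f).indicator hA).add ((Lp.memLp l).indicator hA.compl)
  -- D is itself decomposable
  have hDdec : ∀ f ∈ D, ∀ l ∈ D, ∀ A : Set Ω, MeasurableSet A →
      ∃ g' ∈ D, (g' : Lp E p P) =ᵐ[P] fun ω => A.indicator (⇑f) ω + Aᶜ.indicator (⇑l) ω := by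
    intro f hf l hl A hA
    refine ⟨(combMem f l A hA).toLp _, ?_, (combMem f l A hA).coeFn_toLp⟩
    refine Set.mem_sInter.2 fun S hS => ?_
    obtain ⟨g'', hg''S, hg''⟩ := hS.2 f (hf S hS) l (hl S hS) A hA
    have : (combMem f l A hA).toLp _ = g'' :=
      Lp.ext ((combMem f l A hA).coeFn_toLp.trans hg''.symm)
    rw [this]; exact hg''S
  constructor
  · rintro ⟨h, hmem, hpos, hdom⟩
    refine ⟨(eLpNorm h p P).toReal, ?_⟩
    have hSmem : {g : Lp E p P | ∀ᵐ ω ∂P, ‖(g : Lp E p P) ω‖ ≤ h ω} ∈ 𝒮 := by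
      constructor
      · exact fun f hf => hdom f hf
      · intro f hf l hl A hA
        refine ⟨(combMem f l A hA).toLp _, Set.mem_setOf.2 ?_, (combMem f l A hA).coeFn_toLp⟩
        filter_upwards [(combMem f l A hA).coeFn_toLp, hf, hl] with ω hω hfω hlω
        rw [hω]
        by_cases hmemA : ω ∈ A
        · simpa [Set.indicator_of_mem hmemA, Set.indicator_of_notMem (by simpa using hmemA : ω ∉ Aᶜ)] using hfω
        · simpa [Set.indicator_of_notMem hmemA, Set.indicator_of_mem (by simpa using hmemA : ω ∈ Aᶜ)] using hlω
    have hclosed : IsClosed {g : Lp E p P | ‖g‖ ≤ (eLpNorm h p P).toReal} :=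
      isClosed_le continuous_norm continuous_const
    have hsub : D ⊆ {g : Lp E p P | ‖g‖ ≤ (eLpNorm h p P).toReal} := by
      intro g hg
      have hg' : ∀ᵐ ω ∂P, ‖(g : Lp E p P) ω‖ ≤ h ω := hg _ hSmem
      have : eLpNorm (⇑g) p P ≤ eLpNorm h p P := by
        refine eLpNorm_mono_ae ?_
        filter_upwards [hg', hpos] with ω h1 h2
        simpa [Real.norm_eq_abs, abs_of_nonneg h2] using h1
      simp only [Set.mem_setOf_eq, Lp.norm_def]
      exact ENNReal.toReal_mono hmem.eLpNorm_ne_top this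
    intro g hg
    exact closure_minimal hsub hclosed hg
  · rintro ⟨C, hC⟩
    obtain ⟨f0, hf0⟩ := hK
    have hC0 : 0 ≤ C := le_trans (norm_nonneg f0) (hC f0 (subset_closure (hKD hf0)))
    have hCD : ∀ g ∈ D, eLpNorm (⇑g) p P ≤ ENNReal.ofReal C := by
      intro g hg
      rw [← ENNReal.ofReal_toReal (Lp.eLpNorm_ne_top g)]
      exact ENNReal.ofReal_le_ofReal (by rw [← Lp.norm_def]; exact hC g (subset_closure hg))
    have hp1 : 1 ≤ p := Fact.out
    have hp0 : p ≠ 0 := (lt_of_lt_of_le zero_lt_one hp1).ne'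
    by_cases hp_top : p = ∞
    · -- trivial case p = ∞
      subst hp_top
      refine ⟨fun _ => C, memLp_const C, Filter.Eventually.of_forall fun _ => hC0, ?_⟩
      intro f hfK
      have h1 : eLpNorm (⇑f) ∞ P ≤ ENNReal.ofReal C := hCD f (hKD hfK)
      rw [eLpNorm_exponent_top, eLpNormEssSup] at h1
      filter_upwards [ae_le_essSup (fun ω => (‖(f : Lp E ∞ P) ω‖₊ : ℝ≥0∞))] with ω hω
      have h2 : (‖(f : Lp E ∞ P) ω‖₊ : ℝ≥0∞) ≤ ENNReal.ofReal C := hω.trans h1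
      rw [← enorm_eq_nnnorm, ← ofReal_norm] at h2
      exact (ENNReal.ofReal_le_ofReal_iff hC0).1 h2
    -- main case p < ∞
    set q : ℝ := p.toReal with hqdef
    have hq : 0 < q := ENNReal.toReal_pos hp0 hp_top
    -- the q-integral of the finset-sup of norms
    set I : Finset (Lp E p P) → ℝ≥0∞ :=
      fun F => ∫⁻ ω, ((F.sup fun f => ‖(f : Lp E p P) ω‖₊ : ℝ≥0) : ℝ≥0∞) ^ q ∂P with hIdef
    have hImono : ∀ {F F' : Finset (Lp E p P)}, F ⊆ F' → I F ≤ I F' := by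
      intro F F' hFF'
      exact lintegral_mono fun ω => ENNReal.rpow_le_rpow
        (ENNReal.coe_le_coe.2 (Finset.sup_mono hFF')) hq.le
    -- domination of finite subsets of K by a member of D
    have hdomF : ∀ F : Finset (Lp E p P), ↑F ⊆ K →
        ∃ g ∈ D, ∀ᵐ ω ∂P, ∀ f ∈ F, ‖(f : Lp E p P) ω‖₊ ≤ ‖(g : Lp E p P) ω‖₊ := by
      intro F
      induction F using Finset.induction_on with
      | empty =>
          exact fun _ => ⟨f0, hKD hf0, Filter.Eventually.of_forall (by simp)⟩
      | @insert a F ha ih =>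
          intro hFK
          obtain ⟨g, hgD, hg⟩ := ih (subset_trans (by exact_mod_cast Finset.subset_insert a F) hFK)
          have haK : a ∈ K := hFK (by simp)
          set A : Set Ω := {ω | ‖(a : Lp E p P) ω‖₊ ≤ ‖(g : Lp E p P) ω‖₊} with hAdef
          have hA : MeasurableSet A :=
            measurableSet_le (Lp.stronglyMeasurable a).nnnorm.measurable
              (Lp.stronglyMeasurable g).nnnorm.measurable
          obtain ⟨g', hg'D, hg'⟩ := hDdec g hgD a (hKD haK) A hA
          refine ⟨g', hg'D, ?_⟩
          filter_upwards [hg, hg'] with ω h1 h2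
          intro f hf
          have hval : ‖(g' : Lp E p P) ω‖₊ = if ω ∈ A then ‖(g : Lp E p P) ω‖₊ else ‖(a : Lp E p P) ω‖₊ := by
            rw [h2]
            by_cases hωA : ω ∈ A
            · simp [Set.indicator_of_mem hωA,
                Set.indicator_of_notMem (by simpa using hωA : ω ∉ Aᶜ), hωA]
            · simp [Set.indicator_of_notMem hωA,
                Set.indicator_of_mem (by simpa using hωA : ω ∈ Aᶜ), hωA]
          rcases Finset.mem_insert.1 hf with rfl | hfF
          · rw [hval]
            by_cases hωA : ω ∈ A
            · rw [if_pos hωA]; exact hωA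
            · simp [hωA]
          · rw [hval]
            by_cases hωA : ω ∈ A
            · simpa [hωA] using h1 f hfF
            · simp only [hωA, if_false]
              have hnA : ‖(g : Lp E p P) ω‖₊ ≤ ‖(a : Lp E p P) ω‖₊ := le_of_not_ge hωA
              exact (h1 f hfF).trans hnA
    -- the uniform bound on I
    set B : ℝ≥0∞ := ENNReal.ofReal C ^ q with hBdef
    have hBne : B ≠ ∞ := ENNReal.rpow_ne_top_of_nonneg hq.le ENNReal.ofReal_ne_top
    have hIB : ∀ F : Finset (Lp E p P), ↑F ⊆ K → I F ≤ B := by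
      intro F hFK
      obtain ⟨g, hgD, hg⟩ := hdomF F hFK
      have step1 : I F ≤ ∫⁻ ω, (‖(g : Lp E p P) ω‖₊ : ℝ≥0∞) ^ q ∂P := by
        refine lintegral_mono_ae (hg.mono fun ω hω => ?_)
        exact ENNReal.rpow_le_rpow (ENNReal.coe_le_coe.2 (Finset.sup_le hω)) hq.le
      have step2 : ∫⁻ ω, (‖(g : Lp E p P) ω‖₊ : ℝ≥0∞) ^ q ∂P = eLpNorm (⇑g) p P ^ q := by
        rw [eLpNorm_eq_lintegral_rpow_enorm_toReal hp0 hp_top]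
        simp only [enorm_eq_nnnorm]
        rw [← ENNReal.rpow_mul, one_div,
          inv_mul_cancel₀ hq.ne', ENNReal.rpow_one]
      exact step1.trans (step2.le.trans (ENNReal.rpow_le_rpow (hCD g hgD) hq.le))
    -- the supremum over finite subsets of K
    set T : ℝ≥0∞ := ⨆ F ∈ {F : Finset (Lp E p P) | ↑F ⊆ K}, I F with hTdef
    have hTB : T ≤ B := iSup₂_le hIB
    have hTne : T ≠ ∞ := (lt_of_le_of_lt hTB hBne.lt_top).ne
    -- a sequence of finite subsets achieving T
    obtain ⟨u, -, hu_tendsto, hu_mem⟩ :=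
      exists_seq_tendsto_sSup (S := I '' {F : Finset (Lp E p P) | ↑F ⊆ K})
        ⟨I ∅, ⟨∅, by simp, rfl⟩⟩ (OrderTop.bddAbove _)
    rw [sSup_image] at hu_tendsto
    choose F hFK' hFI using hu_mem
    set G : ℕ → Finset (Lp E p P) := fun n => (Finset.range (n + 1)).biUnion F with hGdef
    have hFG : ∀ n, F n ⊆ G n := fun n =>
      Finset.subset_biUnion_of_mem F (Finset.self_mem_range_succ n)
    have hGmono : ∀ {n m : ℕ}, n ≤ m → G n ⊆ G m := fun {n m} hnm =>
      Finset.biUnion_subset_biUnion_of_subset_left F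
        (Finset.range_subset_range.2 (Nat.succ_le_succ hnm))
    have hGK : ∀ n, ↑(G n) ⊆ K := by
      intro n x hx
      obtain ⟨k, -, hk⟩ := Finset.mem_biUnion.1 hx
      exact hFK' k hk
    -- the monotone sequence of sup-functions and its limit
    set ρ : ℕ → Ω → ℝ≥0∞ :=
      fun n ω => (((G n).sup fun f => ‖(f : Lp E p P) ω‖₊ : ℝ≥0) : ℝ≥0∞) with hρdef
    have hρmeas : ∀ n, Measurable (ρ n) := fun n => meas_sup_aux (G n)
    have hρmono : ∀ {n m : ℕ}, n ≤ m → ∀ ω, ρ n ω ≤ ρ m ω := fun {n m} hnm ω =>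
      ENNReal.coe_le_coe.2 (Finset.sup_mono (hGmono hnm))
    set Ψ : Ω → ℝ≥0∞ := fun ω => ⨆ n, ρ n ω with hΨdef
    have hΨmeas : Measurable Ψ := Measurable.iSup hρmeas
    -- monotone convergence for the q-th powers
    have hpt : ∀ x : ℕ → ℝ≥0∞, (⨆ n, x n) ^ q = ⨆ n, x n ^ q := fun x =>
      (ENNReal.monotone_rpow_of_nonneg hq.le).map_iSup_of_continuousAt
        ENNReal.continuous_rpow_const.continuousAt (by simp [ENNReal.zero_rpow_of_pos hq])
    have hmc : ∀ σ : ℕ → Ω → ℝ≥0∞, (∀ n, Measurable (σ n)) →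
        (∀ {n m : ℕ}, n ≤ m → ∀ ω, σ n ω ≤ σ m ω) →
        (∫⁻ ω, (⨆ n, σ n ω) ^ q ∂P) = ⨆ n, ∫⁻ ω, σ n ω ^ q ∂P := by
      intro σ hσmeas hσmono
      simp_rw [hpt]
      exact lintegral_iSup
        (fun n => ENNReal.continuous_rpow_const.measurable.comp (hσmeas n))
        (fun n m hnm ω => ENNReal.rpow_le_rpow (hσmono hnm ω) hq.le)
    -- the integral of Ψ^q equals T
    have hIG_le_T : ∀ n, I (G n) ≤ T := fun n =>
      le_iSup₂ (f := fun (F : Finset (Lp E p P)) (_ : ↑F ⊆ K) => I F) (G n) (hGK n)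
    have hΨT : ∫⁻ ω, Ψ ω ^ q ∂P = T := by
      rw [hmc ρ hρmeas hρmono]
      refine le_antisymm (iSup_le fun n => hIG_le_T n) ?_
      refine le_of_tendsto' hu_tendsto fun n => ?_
      calc u n = I (F n) := (hFI n).symm
        _ ≤ I (G n) := hImono (hFG n)
        _ ≤ ⨆ m, I (G m) := le_iSup (fun m => I (G m)) n
    have hΨq_ne : ∫⁻ ω, Ψ ω ^ q ∂P ≠ ∞ := by rw [hΨT]; exact hTne
    have hΨfin : ∀ᵐ ω ∂P, Ψ ω < ∞ := by
      have h1 := ae_lt_top (ENNReal.continuous_rpow_const.measurable.comp hΨmeas) hΨq_ne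
      exact h1.mono fun ω hω => (ENNReal.rpow_lt_top_iff_of_pos hq).1 hω
    -- the dominating function
    refine ⟨fun ω => (Ψ ω).toReal, ?_, Filter.Eventually.of_forall fun ω => ENNReal.toReal_nonneg, ?_⟩
    · refine ⟨hΨmeas.ennreal_toReal.aestronglyMeasurable, ?_⟩
      rw [eLpNorm_eq_lintegral_rpow_enorm_toReal hp0 hp_top]
      simp only [enorm_eq_nnnorm]
      have heq : ∫⁻ ω, (‖(Ψ ω).toReal‖₊ : ℝ≥0∞) ^ p.toReal ∂P = ∫⁻ ω, Ψ ω ^ q ∂P := by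
        refine lintegral_congr_ae (hΨfin.mono fun ω hω => ?_)
        show (‖(Ψ ω).toReal‖₊ : ℝ≥0∞) ^ p.toReal = Ψ ω ^ q
        rw [← hqdef]
        congr 1
        rw [← enorm_eq_nnnorm, ← ofReal_norm, Real.norm_eq_abs, abs_of_nonneg ENNReal.toReal_nonneg,
          ENNReal.ofReal_toReal hω.ne]
      rw [heq, hΨT]
      exact ENNReal.rpow_lt_top_of_nonneg (by positivity) hTne
    · intro f hfK
      set c : Ω → ℝ≥0∞ := fun ω => (‖(f : Lp E p P) ω‖₊ : ℝ≥0∞) with hcdef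
      have hcmeas : Measurable c := (Lp.stronglyMeasurable f).nnnorm.measurable.coe_nnreal_ennreal
      have hsup_eq : ∀ n ω, ρ n ω ⊔ c ω =
          (((insert f (G n)).sup fun f' => ‖(f' : Lp E p P) ω‖₊ : ℝ≥0) : ℝ≥0∞) := by
        intro n ω
        rw [Finset.sup_insert, ENNReal.coe_mono.map_sup, sup_comm]
      have hinsK : ∀ n, ↑(insert f (G n)) ⊆ K := by
        intro n x hx
        rcases Finset.mem_insert.1 hx with rfl | hxG
        · exact hfK
        · exact hGK n hxG
      have hint' : ∫⁻ ω, (Ψ ω ⊔ c ω) ^ q ∂P ≤ T := by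
        have heq2 : ∀ ω, Ψ ω ⊔ c ω = ⨆ n, (ρ n ω ⊔ c ω) := fun ω => iSup_sup
        calc ∫⁻ ω, (Ψ ω ⊔ c ω) ^ q ∂P
            = ∫⁻ ω, (⨆ n, (ρ n ω ⊔ c ω)) ^ q ∂P := by simp_rw [heq2]
          _ = ⨆ n, ∫⁻ ω, (ρ n ω ⊔ c ω) ^ q ∂P :=
              hmc _ (fun n => (hρmeas n).max hcmeas)
                (fun {n m} hnm ω => sup_le_sup_right (hρmono hnm ω) _)
          _ ≤ T := by
              refine iSup_le fun n => ?_
              have : ∫⁻ ω, (ρ n ω ⊔ c ω) ^ q ∂P = I (insert f (G n)) := by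
                refine lintegral_congr fun ω => ?_
                rw [hsup_eq n ω]
              rw [this]
              exact le_iSup₂ (f := fun (F : Finset (Lp E p P)) (_ : ↑F ⊆ K) => I F)
                (insert f (G n)) (hinsK n)
      -- compare the two integrals
      have hmeas1 : Measurable fun ω => Ψ ω ^ q :=
        ENNReal.continuous_rpow_const.measurable.comp hΨmeas
      have hmeas2 : Measurable fun ω => (Ψ ω ⊔ c ω) ^ q :=
        ENNReal.continuous_rpow_const.measurable.comp (hΨmeas.max hcmeas)
      have hzero : ∫⁻ ω, ((Ψ ω ⊔ c ω) ^ q - Ψ ω ^ q) ∂P = 0 := by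
        rw [lintegral_sub hmeas1 hΨq_ne (Filter.Eventually.of_forall fun ω =>
          ENNReal.rpow_le_rpow le_sup_left hq.le)]
        rw [hΨT]
        exact tsub_eq_zero_of_le hint'
      have haee := (lintegral_eq_zero_iff (hmeas2.sub hmeas1)).1 hzero
      filter_upwards [haee, hΨfin] with ω h1 h2
      have h3 : (Ψ ω ⊔ c ω) ^ q ≤ Ψ ω ^ q := tsub_eq_zero_iff_le.1 h1
      have h4 : c ω ≤ Ψ ω := le_sup_right.trans ((ENNReal.rpow_le_rpow_iff hq).1 h3)
      have h5 := ENNReal.toReal_mono h2.ne h4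
      simpa [hcdef, coe_nnnorm] using h5
end

section
/- Let K be a nonempty subset of L^2 integrands and suppose the integral functional I is a linear isometry into the space of centered (mean-zero) random variables in L^2(Ω, F_t, P; ℝ^d). If the set I(K) is decomposable with respect to F_t and there exists A ∈ F_t with 0 < P(A) < 1, then K is a singleton. -/
open MeasureTheory ENNReal

/-- if `I` is a linear integral functional into centered square-integrable
`F_t`-measurable random variables with `I(φ−γ) = 0` a.e. implying `φ = γ`, and the image
`I(K)` is decomposable with respect to the sub-σ-algebra `m = F_t` (which contains a set
of probability strictly between 0 and 1), then `K` is a singleton. -/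
theorem decomposable_image_centered_implies_singleton
    {Ω V : Type*} [MeasurableSpace Ω]
    (m : MeasurableSpace Ω) (hm : m ≤ ‹MeasurableSpace Ω›)
    (P : Measure Ω) [IsProbabilityMeasure P]
    [AddCommGroup V] [Module ℝ V] (d : ℕ)
    (I : V →ₗ[ℝ] (Ω → EuclideanSpace ℝ (Fin d)))
    (K : Set V) (hK : K.Nonempty)
    (hmeas : ∀ φ ∈ K, Measurable[m] (I φ))
    (hL2 : ∀ φ ∈ K, MemLp (I φ) 2 P)
    (hcent : ∀ φ ∈ K, ∫ ω, I φ ω ∂P = 0)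
    (hinj : ∀ φ γ : V, (I (φ - γ) =ᵐ[P] 0) → φ = γ)
    (hdec : ∀ φ ∈ K, ∀ γ ∈ K, ∀ A : Set Ω, MeasurableSet[m] A →
      (A.indicator (I φ) + Aᶜ.indicator (I γ)) ∈ I '' K)
    (hA : ∃ A : Set Ω, MeasurableSet[m] A ∧ 0 < P A ∧ P A < 1) :
    ∃ φ, K = {φ} := by
  obtain ⟨φ₀, hφ₀⟩ := hK
  refine ⟨φ₀, Set.eq_singleton_iff_unique_mem.2 ⟨hφ₀, fun γ hγ => ?_⟩⟩
  -- integrability of images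
  have hint : ∀ φ ∈ K, Integrable (I φ) P := fun φ h =>
    (hL2 φ h).integrable (by norm_num)
  -- key: set integrals of I γ - I φ₀ over m-measurable sets vanish
  have hkey : ∀ A : Set Ω, MeasurableSet[m] A →
      ∫ ω in A, (I γ - I φ₀) ω ∂P = 0 := by
    intro A hAm
    have hA' : MeasurableSet A := hm _ hAm
    obtain ⟨ψ, hψK, hψ⟩ := hdec γ hγ φ₀ hφ₀ A hAm
    have h1 : Integrable (A.indicator (I γ)) P := (hint γ hγ).indicator hA'
    have h2 : Integrable (Aᶜ.indicator (I φ₀)) P := (hint φ₀ hφ₀).indicator hA'.compl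
    have hsum : ∫ ω in A, I γ ω ∂P + ∫ ω in Aᶜ, I φ₀ ω ∂P = 0 := by
      have := hcent ψ hψK
      rw [hψ] at this
      simp only [Pi.add_apply] at this
      rw [integral_add h1 h2] at this
      rwa [integral_indicator hA', integral_indicator hA'.compl] at this
    have hsplit : ∫ ω in A, I φ₀ ω ∂P + ∫ ω in Aᶜ, I φ₀ ω ∂P = 0 := by
      rw [integral_add_compl hA' (hint φ₀ hφ₀)]
      exact hcent φ₀ hφ₀
    have hAint : ∫ ω in A, I γ ω ∂P = ∫ ω in A, I φ₀ ω ∂P := by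
      have := sub_eq_zero.mpr (hsum.trans hsplit.symm)
      simpa [add_sub_add_right_eq_sub, sub_eq_zero] using this
    simp only [Pi.sub_apply]
    rw [integral_sub ((hint γ hγ).integrableOn) ((hint φ₀ hφ₀).integrableOn), hAint,
      sub_self]
  -- the difference is m-strongly-measurable and a.e. zero
  set f : Ω → EuclideanSpace ℝ (Fin d) := I γ - I φ₀ with hf
  have hfm : Measurable[m] f := (hmeas γ hγ).sub (hmeas φ₀ hφ₀)
  have hfi : Integrable f P := (hint γ hγ).sub (hint φ₀ hφ₀)
  have hfsm : FinStronglyMeasurable f (P.trim hm) := by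
    have : SigmaFinite (P.trim hm) := by
      have : IsFiniteMeasure (P.trim hm) := isFiniteMeasure_trim hm
      infer_instance
    have hsm : StronglyMeasurable[m] f := hfm.stronglyMeasurable
    exact hsm.finStronglyMeasurable _
  have hf0 : f =ᵐ[P] 0 :=
    ae_eq_zero_of_forall_setIntegral_eq_of_finStronglyMeasurable_trim hm
      (fun s hs _ => hfi.integrableOn) (fun s hs _ => hkey s hs) hfsm
  have : I (γ - φ₀) =ᵐ[P] 0 := by
    rw [map_sub]
    exact hf0
  exact hinj γ φ₀ this
end
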